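/- For all t ∈ [0,T], |h_2^I(t)| ≥ √(κΦ), with equality only in the limit T − t → ∞; i.e., √(κΦ) ≤ −h_2^I(t) ≤ a_I when a_I > √(κΦ). -/

import Mathlib

/-!
Write `s = √(κΦ)`, `u = γ (T - t) ≥ 0` and `w = ζ e^{2u}`. Then `-h(t) = s (w + 1)/(w - 1)`,
and `w ↦ (w + 1)/(w - 1) = 1 + 2/(w - 1)` decreases from `+∞` to `1` on `(1, ∞)`. Since `w ≥ ζ > 1`,
`-h(t)` lies between `s` and `s (ζ + 1)/(ζ - 1)`, and the choice of `ζ` makes the latter equal to `a_I`.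
-/

open Real Set

theorem one_lt_add_one_div_sub_one {w : ℝ} (hw : 1 < w) : 1 < (w + 1) / (w - 1) := by
  rw [one_lt_div (by linarith)]
  linarith

theorem antitoneOn_add_one_div_sub_one :
    AntitoneOn (fun w : ℝ => (w + 1) / (w - 1)) (Ioi 1) := by
  intro v hv w hw hvw
  simp only [mem_Ioi] at hv hw
  rw [div_le_div_iff₀ (by linarith) (by linarith)]
  linarith

theorem add_one_div_sub_one_of_eq_div_sub {a s ζ : ℝ} (has : a ≠ s) (hs : s ≠ 0)
    (hζ : ζ = (a + s) / (a - s)) : (ζ + 1) / (ζ - 1) = a / s := by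
  have has' : a - s ≠ 0 := sub_ne_zero.mpr has
  subst hζ
  rw [div_add_one has', div_sub_one has', div_div_div_cancel_right₀ has',
    div_eq_div_iff (by ring_nf; exact mul_ne_zero hs two_ne_zero) hs]
  ring

theorem one_lt_add_div_sub {a s : ℝ} (hs : 0 < s) (has : s < a) : 1 < (a + s) / (a - s) := by
  rw [one_lt_div (by linarith)]
  linarith

theorem mul_exp_add_exp_neg_div (ζ x : ℝ) :
    (ζ * exp x + exp (-x)) / (ζ * exp x - exp (-x)) =
      (ζ * exp (2 * x) + 1) / (ζ * exp (2 * x) - 1) := by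
  have hx : exp (2 * x) = exp x * exp x := by rw [← exp_add]; ring_nf
  rw [exp_neg, hx, ← mul_div_mul_right _ _ (exp_pos x).ne']
  field_simp

theorem stmt_10 (T κ Φ aI γ ζ : ℝ) (hκ : 0 < κ) (hΦ : 0 < Φ)
    (ha : Real.sqrt (κ * Φ) < aI) (hγ : γ = Real.sqrt (Φ / κ))
    (hζ : ζ = (aI + Real.sqrt (κ * Φ)) / (aI - Real.sqrt (κ * Φ)))
    (h : ℝ → ℝ)
    (hdef : ∀ t, h t = -Real.sqrt (κ * Φ) *
      (ζ * Real.exp (γ * (T - t)) + Real.exp (-γ * (T - t))) /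
      (ζ * Real.exp (γ * (T - t)) - Real.exp (-γ * (T - t)))) :
    ∀ t ∈ Set.Icc (0 : ℝ) T, Real.sqrt (κ * Φ) ≤ -h t ∧ -h t ≤ aI := by
  rintro t ⟨-, htT⟩
  set s := √(κ * Φ)
  have hs : 0 < s := sqrt_pos.mpr (mul_pos hκ hΦ)
  have hζ1 : 1 < ζ := hζ ▸ one_lt_add_div_sub hs ha
  set w := ζ * exp (2 * (γ * (T - t)))
  have hζw : ζ ≤ w := le_mul_of_one_le_right (by linarith) <| one_le_exp <|
    mul_nonneg zero_le_two <| mul_nonneg (hγ ▸ sqrt_nonneg _) (sub_nonneg.mpr htT)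
  have hw1 : 1 < w := hζ1.trans_le hζw
  have hh : -h t = s * ((w + 1) / (w - 1)) := by
    rw [hdef, ← mul_exp_add_exp_neg_div, neg_mul, neg_div, neg_neg, mul_div_assoc, neg_mul]
  refine ⟨?_, ?_⟩
  · rw [hh]
    exact le_mul_of_one_le_right hs.le (one_lt_add_one_div_sub_one hw1).le
  · calc -h t = s * ((w + 1) / (w - 1)) := hh
      _ ≤ s * ((ζ + 1) / (ζ - 1)) :=
        mul_le_mul_of_nonneg_left (antitoneOn_add_one_div_sub_one hζ1 hw1 hζw) hs.le
      _ = aI := by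
        rw [add_one_div_sub_one_of_eq_div_sub ha.ne' hs.ne' hζ, mul_div_cancel₀ _ hs.ne']
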